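/- arXiv:2111.00318 — 3 statements merged into one kernel-verified Lean document; each statement's English description precedes it below -/
import Mathlib

section
/- Let $G$ be a group and let $K$ be an algebraically closed field of characteristic $0$. Fix two characters $\chi_1,\chi_2 : G \to K^\times$. Suppose that $\rho : G \to \mathrm{GL}_2(K)$ is a group homomorphism satisfying: (i) for every $g \in G$, the characteristic polynomial of $\rho(g)$ equals $(X-\chi_1(g))(X-\chi_2(g))$; and (ii) for every $g_1, g_2 \in G$, $(\rho(g_1)-\chi_1(g_1)\cdot I)(\rho(g_2)-\chi_2(g_2)\cdot I)=0$ as $2\times 2$ matrices. Then there exists $M \in \mathrm{GL}_2(K)$ and a function $\kappa : G \to K$ such that for every $g \in G$, $M^{-1}\rho(g)M$ is the upper triangular matrix with first row $(\chi_1(g), \kappa(g))$ and second row $(0, \chi_2(g))$. -/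
open Polynomial Matrix

/-!
If every `ρ g` were the scalar `χ₂ g`, comparing traces would give `χ₁ = χ₂` and any basis would
do. Otherwise some `N = ρ g₀ - χ₂ g₀` is nonzero, and by (ii) every nonzero vector in its image
is a common eigenvector of all `ρ g`, with eigenvalue `χ₁ g`. Taking such a vector as the first
basis vector makes every `ρ g` upper triangular with `χ₁ g` in the corner, and the trace, read
off from (i), puts `χ₂ g` in the other diagonal entry.
-/

namespace Matrix

theorem trace_eq_add_of_charpoly_eq_fin_two {R : Type*} [CommRing R] [Nontrivial R]
    {A : Matrix (Fin 2) (Fin 2) R} {a b : R} (h : A.charpoly = (X - C a) * (X - C b)) :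
    A.trace = a + b := by
  have h1 : -A.trace = -a - b := by
    simpa [charpoly_fin_two, sub_mul, mul_sub, coeff_C] using congrArg (coeff · 1) h
  linear_combination -h1

theorem exists_mulVec_ne_zero {m n α : Type*} [Fintype n] [DecidableEq n] [NonAssocSemiring α]
    {N : Matrix m n α} (hN : N ≠ 0) : ∃ u, N *ᵥ u ≠ 0 := by
  by_contra! h
  exact hN (ext_of_mulVec_single fun i => by rw [h, zero_mulVec])

theorem exists_common_eigenvector_fin_two {ι K : Type*} [Field K]
    (A : ι → Matrix (Fin 2) (Fin 2) K) (a b : ι → K) (htr : ∀ i, (A i).trace = a i + b i)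
    (hprod : ∀ i j, (A i - a i • 1) * (A j - b j • 1) = 0) :
    ∃ v ≠ 0, ∀ i, A i *ᵥ v = a i • v := by
  by_cases hscalar : ∃ j, A j ≠ b j • 1
  · obtain ⟨j, hj⟩ := hscalar
    obtain ⟨u, hu⟩ := exists_mulVec_ne_zero (sub_ne_zero.mpr hj)
    refine ⟨_, hu, fun i => ?_⟩
    have h := congrArg (· *ᵥ u) (hprod i j)
    simp only [← mulVec_mulVec, zero_mulVec, sub_mulVec (A i), smul_mulVec, one_mulVec] at h
    exact sub_eq_zero.mp h
  · refine ⟨Pi.single 0 1, by simp, fun i => ?_⟩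
    have hA : A i = b i • 1 := not_not.mp (not_exists.mp hscalar i)
    have hab : a i = b i := by
      have h := htr i
      rw [hA, trace_smul, trace_one] at h
      simp only [Fintype.card_fin, smul_eq_mul] at h
      linear_combination -h
    rw [hA, smul_mulVec, one_mulVec, hab]

theorem exists_GL_mulVec_single_eq_fin_two {K : Type*} [Field K] {v : Fin 2 → K}
    (hv : v ≠ 0) : ∃ M : GL (Fin 2) K, (M : Matrix (Fin 2) (Fin 2) K) *ᵥ Pi.single 0 1 = v := by
  by_cases h0 : v 0 = 0
  · have h1 : v 1 ≠ 0 := fun h1 => hv (funext fun i => by fin_cases i <;> assumption)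
    refine ⟨GeneralLinearGroup.mkOfDetNeZero !![v 0, 1; v 1, 0] (by simp [h0, h1]), ?_⟩
    ext i; fin_cases i <;> simp
  · refine ⟨GeneralLinearGroup.mkOfDetNeZero !![v 0, 0; v 1, 1] (by simp [h0]), ?_⟩
    ext i; fin_cases i <;> simp

theorem conj_eq_of_mulVec_single_eq_fin_two {R : Type*} [CommRing R]
    (M : GL (Fin 2) R) {A : Matrix (Fin 2) (Fin 2) R} {v : Fin 2 → R} {a b : R}
    (hM : (M : Matrix (Fin 2) (Fin 2) R) *ᵥ Pi.single 0 1 = v) (hv : A *ᵥ v = a • v)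
    (htr : A.trace = a + b) :
    ((M⁻¹ : GL (Fin 2) R) : Matrix (Fin 2) (Fin 2) R) * A * M
      = !![a, (((M⁻¹ : GL (Fin 2) R) : Matrix (Fin 2) (Fin 2) R) * A * M) 0 1; 0, b] := by
  set B := ((M⁻¹ : GL (Fin 2) R) : Matrix (Fin 2) (Fin 2) R) * A * M
  have hcol : B *ᵥ Pi.single 0 1 = a • Pi.single 0 1 := by
    rw [← mulVec_mulVec, hM, ← mulVec_mulVec, hv, mulVec_smul, ← hM, mulVec_mulVec,
      ← Units.val_mul, inv_mul_cancel, Units.val_one, one_mulVec]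
  have h00 : B 0 0 = a := by simpa using congrFun hcol 0
  have h10 : B 1 0 = 0 := by simpa using congrFun hcol 1
  have h11 : B 1 1 = b := by
    have h : B.trace = A.trace := by
      rw [trace_mul_cycle, ← Units.val_mul, mul_inv_cancel, Units.val_one, one_mul]
    rw [trace_fin_two, htr, h00] at h
    exact add_left_cancel h
  rw [eta_fin_two B, h00, h10, h11]
  rfl

end Matrix

theorem orderedUpperTriangular_general
    {G : Type*} [Group G] {K : Type*} [Field K]
    (χ₁ χ₂ : G →* Kˣ) (ρ : G →* GL (Fin 2) K)
    (hchar : ∀ g : G, ((ρ g : Matrix (Fin 2) (Fin 2) K)).charpoly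
      = (X - C (χ₁ g : K)) * (X - C (χ₂ g : K)))
    (hprod : ∀ g₁ g₂ : G,
      ((ρ g₁ : Matrix (Fin 2) (Fin 2) K) - (χ₁ g₁ : K) • (1 : Matrix (Fin 2) (Fin 2) K)) *
      ((ρ g₂ : Matrix (Fin 2) (Fin 2) K) - (χ₂ g₂ : K) • (1 : Matrix (Fin 2) (Fin 2) K)) = 0) :
    ∃ (M : GL (Fin 2) K) (κ : G → K), ∀ g : G,
      ((M⁻¹ : GL (Fin 2) K) : Matrix (Fin 2) (Fin 2) K) *
        (ρ g : Matrix (Fin 2) (Fin 2) K) * (M : Matrix (Fin 2) (Fin 2) K)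
        = !![(χ₁ g : K), κ g; 0, (χ₂ g : K)] := by
  have htr g := trace_eq_add_of_charpoly_eq_fin_two (hchar g)
  obtain ⟨v, hv0, hv⟩ := exists_common_eigenvector_fin_two _ _ _ htr hprod
  obtain ⟨M, hM⟩ := exists_GL_mulVec_single_eq_fin_two hv0
  exact ⟨M, _, fun g => conj_eq_of_mulVec_single_eq_fin_two M hM (hv g) (htr g)⟩

/-- **Ordering lemma.** If a 2-dimensional representation `ρ` of a group `G` over an
algebraically closed field `K` of characteristic zero has characteristic polynomials
`(X - χ₁(g))(X - χ₂(g))` and satisfies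
`(ρ(g₁) - χ₁(g₁))(ρ(g₂) - χ₂(g₂)) = 0` for all `g₁, g₂`, then `ρ` is conjugate to an
upper triangular representation with ordered diagonal characters `χ₁, χ₂`. -/
theorem orderedUpperTriangular
    {G : Type*} [Group G] {K : Type*} [Field K] [IsAlgClosed K] [CharZero K]
    (χ₁ χ₂ : G →* Kˣ) (ρ : G →* GL (Fin 2) K)
    (hchar : ∀ g : G, ((ρ g : Matrix (Fin 2) (Fin 2) K)).charpoly
      = (X - C (χ₁ g : K)) * (X - C (χ₂ g : K)))
    (hprod : ∀ g₁ g₂ : G,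
      ((ρ g₁ : Matrix (Fin 2) (Fin 2) K) - (χ₁ g₁ : K) • (1 : Matrix (Fin 2) (Fin 2) K)) *
      ((ρ g₂ : Matrix (Fin 2) (Fin 2) K) - (χ₂ g₂ : K) • (1 : Matrix (Fin 2) (Fin 2) K)) = 0) :
    ∃ (M : GL (Fin 2) K) (κ : G → K), ∀ g : G,
      ((M⁻¹ : GL (Fin 2) K) : Matrix (Fin 2) (Fin 2) K) *
        (ρ g : Matrix (Fin 2) (Fin 2) K) * (M : Matrix (Fin 2) (Fin 2) K)
        = !![(χ₁ g : K), κ g; 0, (χ₂ g : K)] :=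
  orderedUpperTriangular_general χ₁ χ₂ ρ hchar hprod
end

section
/- Let $G$ be a group and let $K$ be an algebraically closed field of characteristic $0$. Fix two characters $\chi_1,\chi_2 : G \to K^\times$. Suppose that $\rho : G \to \mathrm{GL}_2(K)$ is a group homomorphism such that for every $g \in G$, the characteristic polynomial of $\rho(g)$ equals $(X-\chi_1(g))(X-\chi_2(g))$. Then there exist $M \in \mathrm{GL}_2(K)$, a permutation $\sigma$ of $\{1,2\}$, and a function $\kappa : G \to K$ such that for every $g \in G$, $M^{-1}\rho(g)M$ is the upper triangular matrix with first row $(\chi_{\sigma(1)}(g), \kappa(g))$ and second row $(0, \chi_{\sigma(2)}(g))$; in particular $\rho$ has a one-dimensional invariant subspace. -/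
open Polynomial Matrix


private lemma charpoly_trace_det {K : Type*} [Field K] (A : Matrix (Fin 2) (Fin 2) K) (a b : K)
    (h : A.charpoly = (X - C a) * (X - C b)) : A.trace = a + b ∧ A.det = a * b := by
  have hexp : (X - C a) * (X - C b) = X ^ 2 - C (a + b) * X + C (a * b) := by
    rw [C_add, C_mul]; ring
  have htr := A.trace_eq_neg_charpoly_coeff
  have hdet := A.det_eq_sign_charpoly_coeff
  rw [h, hexp] at htr hdet
  constructor
  · rw [htr]; simp [coeff_X_pow, Fintype.card_fin]
  · rw [hdet]; simp [coeff_X_pow, Fintype.card_fin]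

private lemma ch_two {K : Type*} [Field K] (A : Matrix (Fin 2) (Fin 2) K) (a b : K)
    (h : A.charpoly = (X - C a) * (X - C b)) :
    (A - a • 1) * (A - b • 1) = 0 := by
  have hA := A.aeval_self_charpoly
  rw [h] at hA
  rw [_root_.map_mul, map_sub, map_sub, aeval_X, aeval_C, aeval_C] at hA
  simpa [Algebra.algebraMap_eq_smul_one] using hA

private lemma exists_ne_zero_col {K : Type*} [Field K] (A : Matrix (Fin 2) (Fin 2) K)
    (h : A ≠ 0) : ∃ j, (fun i => A i j) ≠ 0 := by
  by_contra hc
  push_neg at hc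
  apply h
  ext i j
  simpa using congrFun (hc j) i

private lemma conj_col {K : Type*} [Field K] (M Minv A : Matrix (Fin 2) (Fin 2) K)
    (h : Minv * M = 1) (j : Fin 2) (μ : K)
    (hv : A *ᵥ (fun i => M i j) = μ • (fun i => M i j)) :
    ∀ i, (Minv * A * M) i j = μ * (1 : Matrix (Fin 2) (Fin 2) K) i j := by
  intro i
  have e1 : (Minv * A * M) i j = (Minv *ᵥ (A *ᵥ (fun i => M i j))) i := by
    simp [Matrix.mul_apply, Matrix.mulVec, dotProduct, Fin.sum_univ_two]
    ring
  rw [e1, hv]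
  have e2 : (Minv *ᵥ (μ • fun i => M i j)) i = μ * (Minv * M) i j := by
    simp [Matrix.mulVec, dotProduct, Matrix.mul_apply, Fin.sum_univ_two]
    ring
  rw [e2, h]

private lemma dep_of_det_eq_zero {K : Type*} [Field K] (v w : Fin 2 → K) (hv : v ≠ 0)
    (h : v 0 * w 1 - w 0 * v 1 = 0) : ∃ t : K, w = t • v := by
  have hv' : v 0 ≠ 0 ∨ v 1 ≠ 0 := by
    by_contra hc
    push_neg at hc
    apply hv
    ext i
    fin_cases i <;> simp [hc.1, hc.2]
  rcases hv' with h0 | h1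
  · refine ⟨w 0 / v 0, ?_⟩
    ext i
    fin_cases i
    · simp; field_simp
    · simp
      field_simp
      linear_combination h
  · by_cases h0 : v 0 = 0
    · have hw0 : w 0 = 0 := by
        have := h
        rw [h0] at this
        simp at this
        rcases this with h' | h'
        · exact h'
        · exact absurd h' h1
      refine ⟨w 1 / v 1, ?_⟩
      ext i
      fin_cases i
      · simp [hw0, h0]
      · simp; field_simp
    · refine ⟨w 0 / v 0, ?_⟩
      ext i
      fin_cases i
      · simp; field_simp
      · simp; field_simp; linear_combination h

private lemma conj_mul_conj {K : Type*} [Field K] {M Minv P Q : Matrix (Fin 2) (Fin 2) K}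
    (h' : M * Minv = 1) : (Minv * P * M) * (Minv * Q * M) = Minv * (P * Q) * M := by
  simp only [mul_assoc]
  rw [← mul_assoc M Minv (Q * M), h', one_mul]

private lemma conj_sub_smul {K : Type*} [Field K] {M Minv P : Matrix (Fin 2) (Fin 2) K}
    (h : Minv * M = 1) (x : K) : Minv * (P - x • 1) * M = Minv * P * M - x • 1 := by
  rw [mul_sub, mul_smul_comm, mul_one, sub_mul, smul_mul_assoc, h]

private lemma smul_one_fin_two {K : Type*} [Field K] (x : K) :
    x • (1 : Matrix (Fin 2) (Fin 2) K) = !![x, 0; 0, x] := by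
  ext i j; fin_cases i <;> fin_cases j <;> simp [Matrix.one_apply]

private lemma trace_conj' {K : Type*} [Field K] {M Minv A : Matrix (Fin 2) (Fin 2) K}
    (h' : M * Minv = 1) : (Minv * A * M).trace = A.trace := by
  rw [Matrix.trace_mul_cycle, h', one_mul]

private lemma det_conj'' {K : Type*} [Field K] {M Minv A : Matrix (Fin 2) (Fin 2) K}
    (h : Minv * M = 1) : (Minv * A * M).det = A.det := by
  have h1 : Minv.det * M.det = 1 := by rw [← Matrix.det_mul, h, Matrix.det_one]
  rw [Matrix.det_mul, Matrix.det_mul]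
  calc Minv.det * A.det * M.det = A.det * (Minv.det * M.det) := by ring
  _ = A.det := by rw [h1, mul_one]

private lemma unconj {K : Type*} [Field K] {M Minv A B : Matrix (Fin 2) (Fin 2) K}
    (h' : M * Minv = 1) (e : Minv * A * M = B) : A = M * B * Minv := by
  rw [← e]
  simp only [mul_assoc]
  rw [h', mul_one, ← mul_assoc, h', one_mul]

private lemma caseII {G : Type*} [Group G] {K : Type*} [Field K]
    (χ₁ χ₂ : G →* Kˣ) (ρ : G →* GL (Fin 2) K)
    (hchar : ∀ g : G, ((ρ g : Matrix (Fin 2) (Fin 2) K)).charpoly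
      = (X - C (χ₁ g : K)) * (X - C (χ₂ g : K)))
    (h12 : ∀ g : G, (χ₁ g : K) = χ₂ g) :
    ∃ (M : GL (Fin 2) K) (σ : Equiv.Perm (Fin 2)) (κ : G → K), ∀ g : G,
      ((M⁻¹ : GL (Fin 2) K) : Matrix (Fin 2) (Fin 2) K) *
        (ρ g : Matrix (Fin 2) (Fin 2) K) * (M : Matrix (Fin 2) (Fin 2) K)
        = !![((![χ₁, χ₂] (σ 0)) g : K), κ g; 0, ((![χ₁, χ₂] (σ 1)) g : K)] := by
  have htr : ∀ g : G, ((ρ g : Matrix (Fin 2) (Fin 2) K)).trace = (χ₁ g : K) + χ₂ g :=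
    fun g => (charpoly_trace_det _ _ _ (hchar g)).1
  by_cases hscal : ∀ g : G, (ρ g : Matrix (Fin 2) (Fin 2) K) = (χ₁ g : K) • 1
  · refine ⟨1, 1, fun _ => 0, fun g => ?_⟩
    rw [inv_one]
    have h1 : ((1 : GL (Fin 2) K) : Matrix (Fin 2) (Fin 2) K) = 1 := rfl
    rw [h1, one_mul, mul_one, hscal g, smul_one_fin_two]
    simp only [Equiv.Perm.coe_one, id_eq, Matrix.cons_val_zero, Matrix.cons_val_one,
      Matrix.head_cons]
    rw [h12 g]
  · push_neg at hscal
    obtain ⟨g₀, hg₀⟩ := hscal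
    set lam : K := (χ₁ g₀ : K) with hlam
    set A : Matrix (Fin 2) (Fin 2) K := (ρ g₀ : Matrix (Fin 2) (Fin 2) K) with hA
    have hchar0 : A.charpoly = (X - C lam) * (X - C lam) := by
      rw [hchar g₀, hlam, ← h12 g₀]
    have hN2 : (A - lam • 1) * (A - lam • 1) = 0 := ch_two A lam lam hchar0
    have hNne : A - lam • 1 ≠ 0 := sub_ne_zero.2 hg₀
    obtain ⟨j, hvne⟩ := exists_ne_zero_col _ hNne
    set v : Fin 2 → K := fun i => (A - lam • 1) i j with hv
    have hNv : (A - lam • 1) *ᵥ v = 0 := by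
      ext i
      have h2 := congrFun (congrFun hN2 i) j
      simp only [Matrix.mul_apply, Fin.sum_univ_two, Matrix.zero_apply] at h2
      simp only [Matrix.mulVec, dotProduct, Fin.sum_univ_two, hv, Pi.zero_apply]
      exact h2
    have hAv : A *ᵥ v = lam • v := by
      have e : A = (A - lam • 1) + lam • 1 := by abel
      rw [e, Matrix.add_mulVec, hNv, zero_add, Matrix.smul_mulVec, Matrix.one_mulVec]
    have hvne' : v 0 ≠ 0 ∨ v 1 ≠ 0 := by
      by_contra hcon
      push_neg at hcon
      apply hvne
      funext i
      fin_cases i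
      · exact hcon.1
      · exact hcon.2
    obtain ⟨w, hdet0⟩ : ∃ w : Fin 2 → K, v 0 * w 1 - w 0 * v 1 ≠ 0 := by
      by_cases h0 : v 0 = 0
      · have h1 : v 1 ≠ 0 := by
          rcases hvne' with h | h
          · exact absurd h0 h
          · exact h
        refine ⟨![1, 0], ?_⟩
        simpa [h0] using h1
      · exact ⟨![0, 1], by simpa using h0⟩
    set Mm : Matrix (Fin 2) (Fin 2) K := !![v 0, w 0; v 1, w 1] with hMm
    have hdetM : Mm.det ≠ 0 := by
      rw [hMm, Matrix.det_fin_two]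
      simpa using hdet0
    set Minv := Mm⁻¹ with hMinv
    have hMM : Minv * Mm = 1 := Matrix.nonsing_inv_mul _ (Ne.isUnit hdetM)
    have hMM' : Mm * Minv = 1 := Matrix.mul_nonsing_inv _ (Ne.isUnit hdetM)
    set U : GL (Fin 2) K := ⟨Mm, Minv, hMM', hMM⟩ with hU
    set τ : G → Matrix (Fin 2) (Fin 2) K :=
      fun g => Minv * (ρ g : Matrix (Fin 2) (Fin 2) K) * Mm with hτ
    have hτapp : ∀ g : G, τ g = Minv * (ρ g : Matrix (Fin 2) (Fin 2) K) * Mm := fun g => rfl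
    have hτmul : ∀ a b : G, τ (a * b) = τ a * τ b := by
      intro a b
      rw [hτapp, hτapp, hτapp, conj_mul_conj hMM']
      have e : ((ρ (a * b) : GL (Fin 2) K) : Matrix (Fin 2) (Fin 2) K)
          = (ρ a : Matrix (Fin 2) (Fin 2) K) * (ρ b : Matrix (Fin 2) (Fin 2) K) := by
        rw [_root_.map_mul]; rfl
      rw [e]
    have htrτ : ∀ g : G, τ g 0 0 + τ g 1 1 = (χ₁ g : K) + χ₂ g := by
      intro g
      have h2 : (τ g).trace = (χ₁ g : K) + χ₂ g := by
        rw [hτapp, trace_conj' hMM', htr g]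
      rw [← h2, Matrix.trace_fin_two]
    have hcol0 : (fun i => Mm i 0) = v := by
      funext i
      fin_cases i <;> simp [hMm]
    have hAv' : A *ᵥ (fun i => Mm i 0) = lam • (fun i => Mm i 0) := by
      rw [hcol0]; exact hAv
    have h00 : τ g₀ 0 0 = lam := by
      have h2 := conj_col Mm Minv A hMM 0 lam hAv' 0
      rw [hτapp]
      simpa [Matrix.one_apply] using h2
    have h10 : τ g₀ 1 0 = 0 := by
      have h2 := conj_col Mm Minv A hMM 0 lam hAv' 1
      rw [hτapp]
      simpa [Matrix.one_apply] using h2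
    have h11 : τ g₀ 1 1 = lam := by
      have h2 := htrτ g₀
      rw [h00, ← h12 g₀, ← hlam] at h2
      linear_combination h2
    have ht : τ g₀ 0 1 ≠ 0 := by
      intro ht0
      apply hg₀
      have hτ0 : τ g₀ = lam • 1 := by
        rw [smul_one_fin_two, Matrix.eta_fin_two (τ g₀), h00, h10, h11, ht0]
      have hAe : A = Mm * (lam • (1 : Matrix (Fin 2) (Fin 2) K)) * Minv :=
        unconj hMM' (by rw [← hτapp g₀, hτ0])
      rw [hAe, mul_smul_comm, mul_one, smul_mul_assoc, hMM']
    have hcz : ∀ g : G, τ g 1 0 = 0 := by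
      intro g
      have h1 : (τ g₀ * τ g).trace = (χ₁ (g₀ * g) : K) + χ₂ (g₀ * g) := by
        rw [← hτmul, hτapp, trace_conj' hMM', htr]
      rw [Matrix.trace_fin_two] at h1
      simp only [Matrix.mul_apply, Fin.sum_univ_two] at h1
      rw [h00, h10, h11] at h1
      have h2 : (χ₁ (g₀ * g) : K) = lam * χ₁ g := by rw [_root_.map_mul, Units.val_mul, hlam]
      have h3 : (χ₂ (g₀ * g) : K) = lam * χ₁ g := by
        rw [_root_.map_mul, Units.val_mul, ← h12 g, ← h12 g₀, hlam]
      have h4 := htrτ g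
      rw [← h12 g] at h4
      rw [h2, h3] at h1
      have h5 : τ g₀ 0 1 * τ g 1 0 = 0 := by linear_combination h1 - lam * h4
      rcases mul_eq_zero.1 h5 with h | h
      · exact absurd h ht
      · exact h
    have hdiagτ : ∀ g : G, τ g 0 0 = (χ₁ g : K) := by
      intro g
      have hchg : ((ρ g : Matrix (Fin 2) (Fin 2) K)).charpoly
          = (X - C (χ₁ g : K)) * (X - C (χ₁ g : K)) := by
        rw [hchar g, ← h12 g]
      have hsq := ch_two _ _ _ hchg
      have hconj : (τ g - (χ₁ g : K) • 1) * (τ g - (χ₁ g : K) • 1) = 0 := by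
        rw [hτapp, ← conj_sub_smul hMM, conj_mul_conj hMM', hsq, mul_zero, zero_mul]
      have h6 := congrFun (congrFun hconj 0) 0
      simp only [Matrix.mul_apply, Fin.sum_univ_two, Matrix.sub_apply, Matrix.smul_apply,
        Matrix.one_apply, Matrix.zero_apply, smul_eq_mul] at h6
      rw [hcz g] at h6
      simp at h6
      linear_combination h6
    have hdτ : ∀ g : G, τ g 1 1 = (χ₂ g : K) := by
      intro g
      have h4 := htrτ g
      rw [hdiagτ g] at h4
      linear_combination h4
    refine ⟨U, 1, fun g => τ g 0 1, fun g => ?_⟩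
    have hg1 : ((U⁻¹ : GL (Fin 2) K) : Matrix (Fin 2) (Fin 2) K) = Minv := rfl
    have hg2 : ((U : GL (Fin 2) K) : Matrix (Fin 2) (Fin 2) K) = Mm := rfl
    rw [hg1, hg2, ← hτapp g]
    simp only [Equiv.Perm.coe_one, id_eq, Matrix.cons_val_zero, Matrix.cons_val_one,
      Matrix.head_cons]
    rw [Matrix.eta_fin_two (τ g), hdiagτ g, hcz g, hdτ g]
    simp

private lemma caseI {G : Type*} [Group G] {K : Type*} [Field K]
    (χ₁ χ₂ : G →* Kˣ) (ρ : G →* GL (Fin 2) K)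
    (hchar : ∀ g : G, ((ρ g : Matrix (Fin 2) (Fin 2) K)).charpoly
      = (X - C (χ₁ g : K)) * (X - C (χ₂ g : K)))
    (g₀ : G) (hαβ : (χ₁ g₀ : K) ≠ χ₂ g₀) :
    ∃ (M : GL (Fin 2) K) (σ : Equiv.Perm (Fin 2)) (κ : G → K), ∀ g : G,
      ((M⁻¹ : GL (Fin 2) K) : Matrix (Fin 2) (Fin 2) K) *
        (ρ g : Matrix (Fin 2) (Fin 2) K) * (M : Matrix (Fin 2) (Fin 2) K)
        = !![((![χ₁, χ₂] (σ 0)) g : K), κ g; 0, ((![χ₁, χ₂] (σ 1)) g : K)] := by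
  have htr : ∀ g : G, ((ρ g : Matrix (Fin 2) (Fin 2) K)).trace = (χ₁ g : K) + χ₂ g :=
    fun g => (charpoly_trace_det _ _ _ (hchar g)).1
  have hdetρ : ∀ g : G, ((ρ g : Matrix (Fin 2) (Fin 2) K)).det = (χ₁ g : K) * χ₂ g :=
    fun g => (charpoly_trace_det _ _ _ (hchar g)).2
  set α : K := (χ₁ g₀ : K) with hα
  set β : K := (χ₂ g₀ : K) with hβ
  set A : Matrix (Fin 2) (Fin 2) K := (ρ g₀ : Matrix (Fin 2) (Fin 2) K) with hA
  have hCH1 : (A - α • 1) * (A - β • 1) = 0 := ch_two _ _ _ (hchar g₀)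
  have hCH2 : (A - β • 1) * (A - α • 1) = 0 := ch_two _ _ _ (by rw [hchar g₀]; ring)
  have hPne : A - β • 1 ≠ 0 := by
    intro h
    have hAe : A = β • 1 := sub_eq_zero.1 h
    have h2 : A.trace = β + β := by
      rw [hAe, smul_one_fin_two, Matrix.trace_fin_two]; simp
    rw [htr g₀] at h2
    exact hαβ (by linear_combination h2)
  have hQne : A - α • 1 ≠ 0 := by
    intro h
    have hAe : A = α • 1 := sub_eq_zero.1 h
    have h2 : A.trace = α + α := by
      rw [hAe, smul_one_fin_two, Matrix.trace_fin_two]; simp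
    rw [htr g₀] at h2
    exact hαβ (by linear_combination -h2)
  obtain ⟨j, hvne⟩ := exists_ne_zero_col _ hPne
  set v : Fin 2 → K := fun i => (A - β • 1) i j with hv
  have hAv : A *ᵥ v = α • v := by
    have hNv : (A - α • 1) *ᵥ v = 0 := by
      ext i
      have h2 := congrFun (congrFun hCH1 i) j
      simp only [Matrix.mul_apply, Fin.sum_univ_two, Matrix.zero_apply] at h2
      simp only [Matrix.mulVec, dotProduct, Fin.sum_univ_two, hv, Pi.zero_apply]
      exact h2
    have e : A = (A - α • 1) + α • 1 := by abel
    rw [e, Matrix.add_mulVec, hNv, zero_add, Matrix.smul_mulVec, Matrix.one_mulVec]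
  obtain ⟨j', hwne⟩ := exists_ne_zero_col _ hQne
  set w : Fin 2 → K := fun i => (A - α • 1) i j' with hw
  have hAw : A *ᵥ w = β • w := by
    have hNw : (A - β • 1) *ᵥ w = 0 := by
      ext i
      have h2 := congrFun (congrFun hCH2 i) j'
      simp only [Matrix.mul_apply, Fin.sum_univ_two, Matrix.zero_apply] at h2
      simp only [Matrix.mulVec, dotProduct, Fin.sum_univ_two, hw, Pi.zero_apply]
      exact h2
    have e : A = (A - β • 1) + β • 1 := by abel
    rw [e, Matrix.add_mulVec, hNw, zero_add, Matrix.smul_mulVec, Matrix.one_mulVec]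
  set Mm : Matrix (Fin 2) (Fin 2) K := !![v 0, w 0; v 1, w 1] with hMm
  have hdetM : Mm.det ≠ 0 := by
    intro h
    rw [hMm, Matrix.det_fin_two] at h
    have h' : v 0 * w 1 - w 0 * v 1 = 0 := by
      simpa using h
    obtain ⟨t, ht⟩ := dep_of_det_eq_zero v w hvne h'
    have ht0 : t ≠ 0 := by
      intro h0
      apply hwne
      rw [ht, h0, zero_smul]
    have h1 : A *ᵥ w = (t * α) • v := by
      rw [ht, Matrix.mulVec_smul, hAv, smul_smul]
    have h2 : A *ᵥ w = (t * β) • v := by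
      rw [hAw, ht, smul_smul, mul_comm β t]
    have h3 : ((t * α) - (t * β)) • v = 0 := by
      rw [sub_smul, ← h1, h2, sub_self]
    have h4 : t * α = t * β := by
      by_contra hne
      exact hvne ((smul_eq_zero.1 h3).resolve_left (sub_ne_zero.2 hne))
    exact hαβ (mul_left_cancel₀ ht0 h4)
  set Minv := Mm⁻¹ with hMinv
  have hMM : Minv * Mm = 1 := Matrix.nonsing_inv_mul _ (Ne.isUnit hdetM)
  have hMM' : Mm * Minv = 1 := Matrix.mul_nonsing_inv _ (Ne.isUnit hdetM)
  set U : GL (Fin 2) K := ⟨Mm, Minv, hMM', hMM⟩ with hU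
  set τ : G → Matrix (Fin 2) (Fin 2) K :=
    fun g => Minv * (ρ g : Matrix (Fin 2) (Fin 2) K) * Mm with hτ
  have hτapp : ∀ g : G, τ g = Minv * (ρ g : Matrix (Fin 2) (Fin 2) K) * Mm := fun g => rfl
  have hτmul : ∀ a b : G, τ (a * b) = τ a * τ b := by
    intro a b
    rw [hτapp, hτapp, hτapp, conj_mul_conj hMM']
    have e : ((ρ (a * b) : GL (Fin 2) K) : Matrix (Fin 2) (Fin 2) K)
        = (ρ a : Matrix (Fin 2) (Fin 2) K) * (ρ b : Matrix (Fin 2) (Fin 2) K) := by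
      rw [_root_.map_mul]; rfl
    rw [e]
  have htrτ : ∀ g : G, τ g 0 0 + τ g 1 1 = (χ₁ g : K) + χ₂ g := by
    intro g
    have h2 : (τ g).trace = (χ₁ g : K) + χ₂ g := by
      rw [hτapp, trace_conj' hMM', htr g]
    rw [← h2, Matrix.trace_fin_two]
  have hcol0 : (fun i => Mm i 0) = v := by
    funext i
    fin_cases i <;> simp [hMm]
  have hcol1 : (fun i => Mm i 1) = w := by
    funext i
    fin_cases i <;> simp [hMm]
  have hAv' : A *ᵥ (fun i => Mm i 0) = α • (fun i => Mm i 0) := by rw [hcol0]; exact hAv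
  have hAw' : A *ᵥ (fun i => Mm i 1) = β • (fun i => Mm i 1) := by rw [hcol1]; exact hAw
  have h00 : τ g₀ 0 0 = α := by
    have h2 := conj_col Mm Minv A hMM 0 α hAv' 0
    rw [hτapp]
    simpa [Matrix.one_apply] using h2
  have h10 : τ g₀ 1 0 = 0 := by
    have h2 := conj_col Mm Minv A hMM 0 α hAv' 1
    rw [hτapp]
    simpa [Matrix.one_apply] using h2
  have h01 : τ g₀ 0 1 = 0 := by
    have h2 := conj_col Mm Minv A hMM 1 β hAw' 0
    rw [hτapp]
    simpa [Matrix.one_apply] using h2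
  have h11 : τ g₀ 1 1 = β := by
    have h2 := conj_col Mm Minv A hMM 1 β hAw' 1
    rw [hτapp]
    simpa [Matrix.one_apply] using h2
  have hdiag : ∀ g : G, τ g 0 0 = (χ₁ g : K) := by
    intro g
    have h1 : (τ g₀ * τ g).trace = (χ₁ (g₀ * g) : K) + χ₂ (g₀ * g) := by
      rw [← hτmul, hτapp, trace_conj' hMM', htr]
    rw [Matrix.trace_fin_two] at h1
    simp only [Matrix.mul_apply, Fin.sum_univ_two] at h1
    rw [h00, h10, h01, h11] at h1
    have h2 : (χ₁ (g₀ * g) : K) = α * χ₁ g := by rw [_root_.map_mul, Units.val_mul, hα]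
    have h3 : (χ₂ (g₀ * g) : K) = β * χ₂ g := by rw [_root_.map_mul, Units.val_mul, hβ]
    rw [h2, h3] at h1
    have h4 := htrτ g
    have h5 : (α - β) * (τ g 0 0 - (χ₁ g : K)) = 0 := by linear_combination h1 - β * h4
    rcases mul_eq_zero.1 h5 with h | h
    · exact absurd (by linear_combination h) hαβ
    · linear_combination h
  have hd : ∀ g : G, τ g 1 1 = (χ₂ g : K) := by
    intro g
    have h4 := htrτ g
    rw [hdiag g] at h4
    linear_combination h4
  have hbc : ∀ g : G, τ g 0 1 * τ g 1 0 = 0 := by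
    intro g
    have h1 : (τ g).det = (χ₁ g : K) * χ₂ g := by rw [hτapp, det_conj'' hMM, hdetρ g]
    rw [Matrix.det_fin_two, hdiag g, hd g] at h1
    linear_combination -h1
  by_cases hcase : ∀ g : G, τ g 1 0 = 0
  · refine ⟨U, 1, fun g => τ g 0 1, fun g => ?_⟩
    have hg1 : ((U⁻¹ : GL (Fin 2) K) : Matrix (Fin 2) (Fin 2) K) = Minv := rfl
    have hg2 : ((U : GL (Fin 2) K) : Matrix (Fin 2) (Fin 2) K) = Mm := rfl
    rw [hg1, hg2, ← hτapp g]
    simp only [Equiv.Perm.coe_one, id_eq, Matrix.cons_val_zero, Matrix.cons_val_one,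
      Matrix.head_cons]
    rw [Matrix.eta_fin_two (τ g), hdiag g, hcase g, hd g]
    simp
  · push_neg at hcase
    obtain ⟨g₁, hc1⟩ := hcase
    have hb : ∀ g : G, τ g 0 1 = 0 := by
      intro g
      by_contra hbg
      have hcg : τ g 1 0 = 0 := (mul_eq_zero.1 (hbc g)).resolve_left hbg
      have hbg1 : τ g₁ 0 1 = 0 := by
        rcases mul_eq_zero.1 (hbc g₁) with h | h
        · exact h
        · exact absurd h hc1
      have hmm := hτmul g g₁
      have hB := congrFun (congrFun hmm 0) 1
      have hC := congrFun (congrFun hmm 1) 0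
      simp only [Matrix.mul_apply, Fin.sum_univ_two] at hB hC
      rw [hbg1, hd g₁] at hB
      rw [hcg, hd g] at hC
      have h5 := hbc (g * g₁)
      rw [hB, hC] at h5
      -- h5 : (χ₁ g * 0 + τ g 0 1 * χ₂ g₁) * (0 * τ g₁ 0 0 + χ₂ g * τ g₁ 1 0) = 0
      simp only [mul_zero, zero_mul, zero_add, add_zero] at h5
      rcases mul_eq_zero.1 h5 with h | h
      · rcases mul_eq_zero.1 h with h' | h'
        · exact hbg h'
        · exact (χ₂ g₁).ne_zero h'
      · rcases mul_eq_zero.1 h with h' | h'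
        · exact (χ₂ g).ne_zero h'
        · exact hc1 h'
    set S : Matrix (Fin 2) (Fin 2) K := !![0, 1; 1, 0] with hS
    have hSS : S * S = 1 := by
      ext i j
      fin_cases i <;> fin_cases j <;>
        simp [hS, Matrix.mul_apply, Fin.sum_univ_two, Matrix.one_apply]
    set Su : GL (Fin 2) K := ⟨S, S, hSS, hSS⟩ with hSu
    refine ⟨U * Su, Equiv.swap 0 1, fun g => τ g 1 0, fun g => ?_⟩
    have hg1 : (((U * Su)⁻¹ : GL (Fin 2) K) : Matrix (Fin 2) (Fin 2) K) = S * Minv := by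
      rw [_root_.mul_inv_rev, Units.val_mul]; rfl
    have hg2 : ((U * Su : GL (Fin 2) K) : Matrix (Fin 2) (Fin 2) K) = Mm * S := by
      rw [Units.val_mul]
    rw [hg1, hg2]
    have hτg : τ g = !![(χ₁ g : K), 0; τ g 1 0, (χ₂ g : K)] := by
      rw [Matrix.eta_fin_two (τ g), hdiag g, hb g, hd g]
      simp
    have hfin : S * Minv * (ρ g : Matrix (Fin 2) (Fin 2) K) * (Mm * S)
        = !![(χ₂ g : K), τ g 1 0; 0, (χ₁ g : K)] := by
      have hLHS : S * Minv * (ρ g : Matrix (Fin 2) (Fin 2) K) * (Mm * S) = S * (τ g * S) := by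
        rw [hτapp]
        simp only [mul_assoc]
      rw [hLHS, hτg]
      ext i j
      fin_cases i <;> fin_cases j <;>
        simp [hS, Matrix.mul_apply, Fin.sum_univ_two]
    rw [hfin]
    simp [Equiv.swap_apply_left, Equiv.swap_apply_right]


/-- If a 2-dimensional representation `ρ` of a group `G` over an algebraically closed field
`K` of characteristic zero has characteristic polynomials `(X - χ₁(g))(X - χ₂(g))`, then `ρ`
is conjugate to an upper triangular representation whose diagonal characters are `χ₁, χ₂` in
some order; in particular `ρ` has a one-dimensional invariant subspace. -/
theorem upperTriangularUpToPermutation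
    {G : Type*} [Group G] {K : Type*} [Field K] [IsAlgClosed K] [CharZero K]
    (χ₁ χ₂ : G →* Kˣ) (ρ : G →* GL (Fin 2) K)
    (hchar : ∀ g : G, ((ρ g : Matrix (Fin 2) (Fin 2) K)).charpoly
      = (X - C (χ₁ g : K)) * (X - C (χ₂ g : K))) :
    (∃ (M : GL (Fin 2) K) (σ : Equiv.Perm (Fin 2)) (κ : G → K), ∀ g : G,
      ((M⁻¹ : GL (Fin 2) K) : Matrix (Fin 2) (Fin 2) K) *
        (ρ g : Matrix (Fin 2) (Fin 2) K) * (M : Matrix (Fin 2) (Fin 2) K)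
        = !![((![χ₁, χ₂] (σ 0)) g : K), κ g; 0, ((![χ₁, χ₂] (σ 1)) g : K)]) ∧
    ∃ W : Submodule K (Fin 2 → K), Module.finrank K W = 1 ∧
      ∀ g : G, W.map (Matrix.toLin' (ρ g : Matrix (Fin 2) (Fin 2) K)) ≤ W := by
  suffices main : ∃ (M : GL (Fin 2) K) (σ : Equiv.Perm (Fin 2)) (κ : G → K), ∀ g : G,
      ((M⁻¹ : GL (Fin 2) K) : Matrix (Fin 2) (Fin 2) K) *
        (ρ g : Matrix (Fin 2) (Fin 2) K) * (M : Matrix (Fin 2) (Fin 2) K)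
        = !![((![χ₁, χ₂] (σ 0)) g : K), κ g; 0, ((![χ₁, χ₂] (σ 1)) g : K)] by
    obtain ⟨M, σ, κ, hM⟩ := main
    refine ⟨⟨M, σ, κ, hM⟩, ?_⟩
    set v : Fin 2 → K := fun i => (M : Matrix (Fin 2) (Fin 2) K) i 0 with hvdef
    have hdetM : (M : Matrix (Fin 2) (Fin 2) K).det ≠ 0 := by
      have : IsUnit (M : Matrix (Fin 2) (Fin 2) K).det :=
        (Matrix.isUnit_iff_isUnit_det _).1 M.isUnit
      exact this.ne_zero
    have hv : v ≠ 0 := by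
      intro hv0
      apply hdetM
      rw [Matrix.det_fin_two]
      have h0 : v 0 = 0 := by rw [hv0]; rfl
      have h1 : v 1 = 0 := by rw [hv0]; rfl
      simp only [hvdef] at h0 h1
      rw [h0, h1]
      ring
    have key : ∀ g : G, (ρ g : Matrix (Fin 2) (Fin 2) K) *ᵥ v
        = ((![χ₁, χ₂] (σ 0)) g : K) • v := by
      intro g
      have h1 : (ρ g : Matrix (Fin 2) (Fin 2) K) * M
          = (M : Matrix (Fin 2) (Fin 2) K) *
            !![((![χ₁, χ₂] (σ 0)) g : K), κ g; 0, ((![χ₁, χ₂] (σ 1)) g : K)] := by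
        rw [← hM g, ← mul_assoc, ← mul_assoc, Units.mul_inv, one_mul]
      ext i
      have := congrFun (congrFun h1 i) 0
      simp [Matrix.mul_apply, Fin.sum_univ_two, Matrix.mulVec, dotProduct] at this ⊢
      rw [this]
      ring
    refine ⟨Submodule.span K {v}, finrank_span_singleton hv, ?_⟩
    intro g
    rw [Submodule.map_span]
    apply Submodule.span_le.2
    rintro x ⟨y, hy, rfl⟩
    simp only [Set.mem_singleton_iff] at hy
    subst hy
    rw [SetLike.mem_coe, Matrix.toLin'_apply, key g]
    exact Submodule.smul_mem _ _ (Submodule.mem_span_singleton_self v)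
  by_cases h12 : ∀ g : G, (χ₁ g : K) = χ₂ g
  · exact caseII χ₁ χ₂ ρ hchar h12
  · push_neg at h12
    obtain ⟨g₀, hg₀⟩ := h12
    exact caseI χ₁ χ₂ ρ hchar g₀ hg₀
end

section
/- Let $G$ be a group, $K$ a field, and $\chi_1, \chi_2 : G \to K^\times$ characters with $\chi_1 \neq \chi_2$. Let $\kappa : G \to K$ be a function such that the map $\rho : G \to \mathrm{GL}_2(K)$ sending $g$ to the upper triangular matrix with first row $(\chi_2(g), \kappa(g))$ and second row $(0, \chi_1(g))$ is a group homomorphism. If the image of $\rho$ is a nonabelian subgroup of $\mathrm{GL}_2(K)$, then there exist $g_1, g_2 \in G$ such that $(\rho(g_1)-\chi_1(g_1)\cdot I)(\rho(g_2)-\chi_2(g_2)\cdot I) \neq 0$ as a $2\times 2$ matrix. (One may take $g_1$ with $\chi_1(g_1) = \chi_2(g_1) = 1$ and $\kappa(g_1) \neq 0$, and $g_2$ with $\chi_1(g_2) \neq \chi_2(g_2)$.) -/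
open Matrix

/-- If `χ₁ ≠ χ₂` and an upper triangular representation with diagonal characters
`χ₂, χ₁` (wrong order) has nonabelian image, then there exist `g₁, g₂` with
`(ρ(g₁) - χ₁(g₁))(ρ(g₂) - χ₂(g₂)) ≠ 0`. -/
theorem exists_nonzero_product_of_nonabelian_image
    {G : Type*} [Group G] {K : Type*} [Field K]
    (χ₁ χ₂ : G →* Kˣ) (hne : χ₁ ≠ χ₂) (κ : G → K)
    (ρ : G →* GL (Fin 2) K)
    (hρ : ∀ g : G, (ρ g : Matrix (Fin 2) (Fin 2) K)
      = !![(χ₂ g : K), κ g; 0, (χ₁ g : K)])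
    (hnonabelian : ¬ ∀ x ∈ ρ.range, ∀ y ∈ ρ.range, x * y = y * x) :
    ∃ g₁ g₂ : G,
      ((ρ g₁ : Matrix (Fin 2) (Fin 2) K) - (χ₁ g₁ : K) • (1 : Matrix (Fin 2) (Fin 2) K)) *
      ((ρ g₂ : Matrix (Fin 2) (Fin 2) K) - (χ₂ g₂ : K) • (1 : Matrix (Fin 2) (Fin 2) K))
        ≠ 0 := by
  push_neg at hnonabelian
  obtain ⟨x, ⟨a, rfl⟩, y, ⟨b, rfl⟩, hxy⟩ := hnonabelian
  have hm : (ρ a : Matrix (Fin 2) (Fin 2) K) * (ρ b : Matrix (Fin 2) (Fin 2) K)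
      ≠ (ρ b : Matrix (Fin 2) (Fin 2) K) * (ρ a : Matrix (Fin 2) (Fin 2) K) := by
    intro h
    exact hxy (Units.ext h)
  rw [hρ a, hρ b] at hm
  have hkey : (χ₂ a : K) * κ b + κ a * (χ₁ b : K)
      ≠ (χ₂ b : K) * κ a + κ b * (χ₁ a : K) := by
    intro h
    apply hm
    ext i j
    fin_cases i <;> fin_cases j <;>
      simp [Matrix.mul_apply, Fin.sum_univ_two, mul_comm] <;> linear_combination h
  refine ⟨a, b, fun h => hkey ?_⟩
  have h01 := congrFun (congrFun h 0) 1
  rw [hρ a, hρ b] at h01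
  simp [Matrix.mul_apply, Fin.sum_univ_two, Matrix.sub_apply, Matrix.smul_apply,
    Matrix.one_apply] at h01
  linear_combination h01
end
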